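/- Assume β·(α+γ) < 4 and for each t ∈ ℝ let p_t denote the unique fixed point in [0,1] of the logit map L_t. Then p_t → 0 as t → +∞, yet p_t > 0 for every finite t. Hence arbitrarily high taxes approximate the effect of deleting the status-quo action but never achieve it exactly; equivalently, the infimum of p_t over all t ∈ ℝ is 0 but is not attained. -/

import Mathlib

/-!
Writing `σ` for the logistic sigmoid, `L_t(p) = σ(-β(α - κ - p(α+γ) + t))` takes values in the
open interval `(0, 1)`, so every fixed point `p_t` is strictly positive. Since `p_t ∈ [0, 1]`,
the term `p_t(α+γ)` is at most `|α+γ|`, and monotonicity of `σ` gives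
`p_t ≤ σ(-β(α - κ - |α+γ| + t))`, which tends to `0` as `t → +∞`.
-/

open Filter

/-- The logit map with status-quo bias: `L_t(p) = 1/(1 + exp(β(α − κ − p(α+γ) + t)))`. -/
noncomputable def logitMap (α γ κ β t p : ℝ) : ℝ :=
  1 / (1 + Real.exp (β * (α - κ - p * (α + γ) + t)))

open Topology Set Real

lemma logitMap_eq_sigmoid (α γ κ β t p : ℝ) :
    logitMap α γ κ β t p = sigmoid (-(β * (α - κ - p * (α + γ) + t))) := by
  rw [logitMap, sigmoid_def, neg_neg, one_div]

lemma logitMap_mem_Ioo (α γ κ β t p : ℝ) : logitMap α γ κ β t p ∈ Ioo 0 1 := by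
  rw [logitMap_eq_sigmoid]
  exact ⟨sigmoid_pos _, sigmoid_lt_one _⟩

lemma logitMap_le_sigmoid {α γ κ β t p : ℝ} (hβ : 0 ≤ β) (hp : p ∈ Icc 0 1) :
    logitMap α γ κ β t p ≤ sigmoid (-(β * (α - κ - |α + γ| + t))) := by
  rw [logitMap_eq_sigmoid]
  refine sigmoid_le (neg_le_neg (mul_le_mul_of_nonneg_left ?_ hβ))
  have : p * (α + γ) ≤ |α + γ| := calc
    p * (α + γ) ≤ p * |α + γ| := mul_le_mul_of_nonneg_left (le_abs_self _) hp.1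
    _ ≤ |α + γ| := mul_le_of_le_one_left (abs_nonneg _) hp.2
  linarith

lemma tendsto_sigmoid_neg_mul_add_atTop {β : ℝ} (hβ : 0 < β) (c : ℝ) :
    Tendsto (fun t => sigmoid (-(β * (c + t)))) atTop (𝓝 0) :=
  tendsto_sigmoid_atBot.comp <| tendsto_neg_atTop_atBot.comp <|
    (tendsto_atTop_add_const_left _ c tendsto_id).const_mul_atTop hβ

lemma csInf_range_eq_zero_of_tendsto {ι : Type*} {l : Filter ι} [l.NeBot] {f : ι → ℝ}
    (hf : ∀ i, 0 ≤ f i) (h : Tendsto f l (𝓝 0)) : sInf (range f) = 0 := by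
  have hbdd : BddBelow (range f) := ⟨0, forall_mem_range.2 hf⟩
  refine le_antisymm ?_ (le_csInf (haveI := l.nonempty_of_neBot; range_nonempty f) ?_)
  · exact ge_of_tendsto' h fun i => csInf_le hbdd (mem_range_self i)
  · exact forall_mem_range.2 hf

section FixedPoint

variable {α γ κ β : ℝ} {p : ℝ → ℝ} (hfix : ∀ t, logitMap α γ κ β t (p t) = p t)
include hfix

lemma mem_Ioo_of_logitMap_fixed (t : ℝ) : p t ∈ Ioo 0 1 :=
  hfix t ▸ logitMap_mem_Ioo α γ κ β t (p t)

lemma tendsto_zero_of_logitMap_fixed (hβ : 0 < β) : Tendsto p atTop (𝓝 0) := by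
  refine squeeze_zero (fun t => (mem_Ioo_of_logitMap_fixed hfix t).1.le) (fun t => ?_)
    (tendsto_sigmoid_neg_mul_add_atTop hβ (α - κ - |α + γ|))
  rw [← hfix t]
  exact logitMap_le_sigmoid hβ.le (Ioo_subset_Icc_self (mem_Ioo_of_logitMap_fixed hfix t))

end FixedPoint

theorem stmt_8_general (α γ κ β : ℝ) (hβ : 0 < β)
    (p : ℝ → ℝ)
    (hfix : ∀ t, logitMap α γ κ β t (p t) = p t) :
    Tendsto p atTop (nhds 0) ∧ (∀ t, 0 < p t) ∧
    sInf (Set.range p) = 0 ∧ (0 : ℝ) ∉ Set.range p := by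
  have hpos : ∀ t, 0 < p t := fun t => (mem_Ioo_of_logitMap_fixed hfix t).1
  have htend : Tendsto p atTop (𝓝 0) := tendsto_zero_of_logitMap_fixed hfix hβ
  exact ⟨htend, hpos, csInf_range_eq_zero_of_tendsto (fun t => (hpos t).le) htend,
    fun ⟨t, ht⟩ => (hpos t).ne' ht⟩

/-- Approximation without replication: under the contraction condition, the unique
QRE-SB equilibrium probability `p_t` tends to `0` as `t → +∞`, yet `p_t > 0` for every
finite `t`; equivalently, the infimum of `p_t` over all `t ∈ ℝ` is `0` but not attained. -/
theorem stmt_8 (α γ κ β : ℝ) (hα : 0 < α) (hγ : 0 < γ) (hκ : 0 ≤ κ) (hβ : 0 < β)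
    (hcontr : β * (α + γ) < 4)
    (p : ℝ → ℝ) (hmem : ∀ t, p t ∈ Set.Icc (0 : ℝ) 1)
    (hfix : ∀ t, logitMap α γ κ β t (p t) = p t) :
    Tendsto p atTop (nhds 0) ∧ (∀ t, 0 < p t) ∧
    sInf (Set.range p) = 0 ∧ (0 : ℝ) ∉ Set.range p :=
  stmt_8_general α γ κ β hβ p hfix
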